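/- arXiv:2402.14687 — 4 statements merged into one kernel-verified Lean document; each statement's English description precedes it below -/
import Mathlib

section
/- For every n ∈ ℕ and every set F of natural numbers belonging to S_n ∗ A_3, there exist sets G_1, G_2, G_3 each belonging to S_n (some possibly empty) such that F = G_1 ∪ G_2 ∪ G_3. -/
/-- `A < B`: every element of `A` is less than every element of `B`. -/
def BlockLt (A B : Finset ℕ) : Prop := ∀ a ∈ A, ∀ b ∈ B, a < b

/-- The Schreier families, defined inductively. -/
def Schreier : ℕ → Set (Finset ℕ)
  | 0 => {F | ∃ i : ℕ, F = {i}}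
  | n + 1 => {F | ∃ L : List (Finset ℕ), L ≠ [] ∧
      (∀ A ∈ L, A ∈ Schreier n) ∧ L.Chain' BlockLt ∧
      (∀ a ∈ L.headI, L.length ≤ a) ∧ F = L.foldr (· ∪ ·) ∅}

/-- The family `S_n ∗ A_3`. -/
def SchreierA3 (n : ℕ) : Set (Finset ℕ) :=
  {F | ∃ L : List (Finset ℕ), L ≠ [] ∧
      (∀ A ∈ L, A.Nonempty ∧ A.card ≤ 3) ∧ L.Chain' BlockLt ∧
      (L.map fun A => sInf (A : Set ℕ)).toFinset ∈ Schreier n ∧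
      F = L.foldr (· ∪ ·) ∅}

/-- `Σ_{i∈F} c i • e i` is an `(n, ε)`-basic special convex combination. -/
def IsBasicSCC (n : ℕ) (ε : ℝ) (F : Finset ℕ) (c : ℕ → ℝ) : Prop :=
  F ∈ Schreier n ∧ (∀ i ∈ F, 0 ≤ c i) ∧ (∑ i ∈ F, c i) = 1 ∧
    ∀ G ⊆ F, G ∈ Schreier (n - 1) → (∑ i ∈ G, c i) < ε

/-! Write `F ∈ S_n ∗ A_3` as `A_1 < ⋯ < A_d` with `#A_i ≤ 3` and `M = {min A_i} ∈ S_n`, and let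
`G_k` collect the `k`-th smallest elements of the blocks. Sending the `k`-th element of `A_i` to
`min A_i` is an order-preserving map `G_k → M` lying below the identity, and Schreier families are
hereditary and spreading, so every nonempty `G_k` lies in `S_n`. -/

open Finset

lemma mem_foldr_union {L : List (Finset ℕ)} {x : ℕ} :
    x ∈ L.foldr (· ∪ ·) ∅ ↔ ∃ A ∈ L, x ∈ A := by
  induction L with
  | nil => simp
  | cons A L ih => simp [ih]

lemma mem_foldr_union_of_mem_headI {L : List (Finset ℕ)} {x : ℕ} (hx : x ∈ L.headI) :
    x ∈ L.foldr (· ∪ ·) ∅ := by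
  cases L with
  | nil => exact absurd hx (notMem_empty x)
  | cons A L => exact mem_union_left _ hx

lemma nonempty_of_mem_schreier : ∀ {n : ℕ} {F : Finset ℕ}, F ∈ Schreier n → F.Nonempty
  | 0, _, ⟨i, rfl⟩ => singleton_nonempty i
  | _ + 1, _, ⟨L, hL, hmem, _, _, rfl⟩ => by
    obtain ⟨A, hA⟩ := List.exists_mem_of_ne_nil L hL
    obtain ⟨x, hx⟩ := nonempty_of_mem_schreier (hmem A hA)
    exact ⟨x, mem_foldr_union.2 ⟨A, hA, hx⟩⟩

lemma pairwise_blockLt_of_isChain {L : List (Finset ℕ)} (hL : L.IsChain BlockLt)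
    (hne : ∀ A ∈ L, A.Nonempty) : L.Pairwise BlockLt := by
  let R : Finset ℕ → Finset ℕ → Prop := fun A B => B.Nonempty ∧ BlockLt A B
  have : Trans R R R := ⟨fun ⟨⟨b, hb⟩, hAB⟩ ⟨hC, hBC⟩ =>
    ⟨hC, fun a ha c hc => (hAB a ha b hb).trans (hBC b hb c hc)⟩⟩
  exact (hL.imp_of_mem_imp fun _ B _ hB h => (⟨hne B hB, h⟩ : R _ B)).pairwise.imp And.right

lemma blockLt_or_blockLt_of_pairwise {L : List (Finset ℕ)} (hL : L.Pairwise BlockLt)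
    {A B : Finset ℕ} (hA : A ∈ L) (hB : B ∈ L) (hAB : A ≠ B) : BlockLt A B ∨ BlockLt B A :=
  @List.Pairwise.forall _ (fun A B => BlockLt A B ∨ BlockLt B A) _ ⟨fun _ _ => Or.symm⟩
    (hL.imp Or.inl) _ hA _ hB hAB

lemma length_le_of_mem_foldr_union {L : List (Finset ℕ)} (hL : L.Pairwise BlockLt)
    (hne : ∀ A ∈ L, A.Nonempty) (hhead : ∀ a ∈ L.headI, L.length ≤ a) {x : ℕ}
    (hx : x ∈ L.foldr (· ∪ ·) ∅) : L.length ≤ x := by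
  obtain ⟨B, hB, hxB⟩ := mem_foldr_union.1 hx
  cases L with
  | nil => simp at hB
  | cons A L =>
    rcases List.mem_cons.1 hB with rfl | hB
    · exact hhead x hxB
    · obtain ⟨a, ha⟩ := hne A List.mem_cons_self
      exact (hhead a ha).trans ((List.pairwise_cons.1 hL).1 B hB a ha x hxB).le

lemma pairwise_blockLt_map_filter {L : List (Finset ℕ)} (hL : L.Pairwise BlockLt)
    {G : Finset ℕ} {φ : ℕ → ℕ} (hφ : StrictMonoOn φ G) :
    (L.map fun A => {g ∈ G | φ g ∈ A}).Pairwise BlockLt := by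
  refine List.pairwise_map.2 (hL.imp fun hAB x hx y hy => ?_)
  rw [mem_filter] at hx hy
  exact (hφ.lt_iff_lt hx.1 hy.1).1 (hAB _ hx.2 _ hy.2)

-- Hereditarity and spreading at once.
theorem mem_schreier_of_strictMonoOn : ∀ {n : ℕ} {M G : Finset ℕ} {φ : ℕ → ℕ},
    M ∈ Schreier n → G.Nonempty → StrictMonoOn φ G → (∀ g ∈ G, φ g ∈ M) →
    (∀ g ∈ G, φ g ≤ g) → G ∈ Schreier n
  | 0, _, G, φ, ⟨i, rfl⟩, ⟨g, hg⟩, hφ, hmaps, _ => by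
    refine ⟨g, eq_singleton_iff_unique_mem.2 ⟨hg, fun x hx => hφ.injOn hx hg ?_⟩⟩
    rw [mem_singleton.1 (hmaps x hx), mem_singleton.1 (hmaps g hg)]
  | n + 1, _, G, φ, ⟨L, _, hmem, hch, hhead, rfl⟩, hG, hφ, hmaps, hle => by
    have hne : ∀ A ∈ L, A.Nonempty := fun A hA => nonempty_of_mem_schreier (hmem A hA)
    have hL := pairwise_blockLt_of_isChain hch hne
    set L' := (L.map fun A => {g ∈ G | φ g ∈ A}).filter (·.Nonempty)
    have hcover : G = L'.foldr (· ∪ ·) ∅ := by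
      ext x
      simp only [mem_foldr_union, L', List.mem_filter, List.mem_map, decide_eq_true_eq]
      constructor
      · intro hx
        obtain ⟨A, hA, hxA⟩ := mem_foldr_union.1 (hmaps x hx)
        exact ⟨_, ⟨⟨A, hA, rfl⟩, x, mem_filter.2 ⟨hx, hxA⟩⟩, mem_filter.2 ⟨hx, hxA⟩⟩
      · rintro ⟨_, ⟨⟨A, -, rfl⟩, -⟩, hx⟩
        exact (mem_filter.1 hx).1
    have hpieces : ∀ B ∈ L', B ∈ Schreier n := by
      simp only [L', List.mem_filter, List.mem_map, decide_eq_true_eq]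
      rintro _ ⟨⟨A, hA, rfl⟩, hB⟩
      exact mem_schreier_of_strictMonoOn (hmem A hA) hB (hφ.mono (coe_subset.2 (filter_subset _ _)))
        (fun g hg => (mem_filter.1 hg).2) (fun g hg => hle g (mem_filter.1 hg).1)
    refine ⟨L', ?_, hpieces, (pairwise_blockLt_map_filter hL hφ).filter _ |>.isChain, ?_, hcover⟩
    · obtain ⟨g, hg⟩ := hG
      rw [hcover] at hg
      obtain ⟨B, hB, -⟩ := mem_foldr_union.1 hg
      exact List.ne_nil_of_mem hB
    · intro a ha
      have haG : a ∈ G := hcover ▸ mem_foldr_union_of_mem_headI ha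
      calc L'.length ≤ L.length := (List.length_filter_le _ _).trans (List.length_map _).le
        _ ≤ φ a := length_le_of_mem_foldr_union hL hne hhead (hmaps a haG)
        _ ≤ a := hle a haG

theorem mem_schreier_of_interlaced {n : ℕ} {M G : Finset ℕ} (hM : M ∈ Schreier n)
    (hG : G.Nonempty) (hbelow : ∀ x ∈ G, ∃ m ∈ M, m ≤ x)
    (hbetween : ∀ x ∈ G, ∀ y ∈ G, x < y → ∃ m ∈ M, x < m ∧ m ≤ y) : G ∈ Schreier n := by
  set φ : ℕ → ℕ := fun x => {m ∈ M | m ≤ x}.sup id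
  have hφ_le (x : ℕ) : φ x ≤ x := Finset.sup_le fun m hm => (mem_filter.1 hm).2
  have le_hφ {x m : ℕ} (hm : m ∈ M) (hmx : m ≤ x) : m ≤ φ x :=
    le_sup (f := id) (mem_filter.2 ⟨hm, hmx⟩)
  refine mem_schreier_of_strictMonoOn hM hG (fun x hx y hy hxy => ?_) (fun x hx => ?_)
    (fun x _ => hφ_le x)
  · obtain ⟨m, hm, hxm, hmy⟩ := hbetween x hx y hy hxy
    exact ((hφ_le x).trans_lt hxm).trans_le (le_hφ hm hmy)
  · obtain ⟨m, hm, hmx⟩ := hbelow x hx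
    obtain ⟨m', hm', hφm'⟩ := exists_mem_eq_sup {m ∈ M | m ≤ x} ⟨m, mem_filter.2 ⟨hm, hmx⟩⟩ id
    exact (show φ x = m' from hφm') ▸ (mem_filter.1 hm').1

-- The `k`-th smallest element of `A`, counting from `0`, as a singleton (empty if `#A ≤ k`).
def kthSmallest (k : ℕ) (A : Finset ℕ) : Finset ℕ := {x ∈ A | #{y ∈ A | y < x} = k}

lemma kthSmallest_subset (k : ℕ) (A : Finset ℕ) : kthSmallest k A ⊆ A := filter_subset _ _

lemma not_lt_of_mem_kthSmallest {k : ℕ} {A : Finset ℕ} {x y : ℕ} (hx : x ∈ kthSmallest k A)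
    (hy : y ∈ kthSmallest k A) : ¬x < y := by
  intro hxy
  rw [kthSmallest, mem_filter] at hx hy
  have hssub : {z ∈ A | z < x} ⊂ {z ∈ A | z < y} :=
    (ssubset_iff_of_subset (monotone_filter_right A fun _ _ hz => hz.trans hxy)).2
      ⟨x, mem_filter.2 ⟨hx.1, hxy⟩, fun h => lt_irrefl x (mem_filter.1 h).2⟩
  exact (card_lt_card hssub).ne (hx.2.trans hy.2.symm)

lemma exists_mem_kthSmallest {A : Finset ℕ} {x : ℕ} (hx : x ∈ A) :
    ∃ k < #A, x ∈ kthSmallest k A :=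
  ⟨#{y ∈ A | y < x}, card_lt_card (filter_ssubset.2 ⟨x, hx, lt_irrefl x⟩), mem_filter.2 ⟨hx, rfl⟩⟩

theorem mem_schreier_biUnion_kthSmallest {n : ℕ} (k : ℕ) {L : List (Finset ℕ)}
    (hne : ∀ A ∈ L, A.Nonempty) (hL : L.Pairwise BlockLt)
    {M : Finset ℕ} (hM : M ∈ Schreier n) (hmin : ∀ A ∈ L, sInf (A : Set ℕ) ∈ M) :
    L.toFinset.biUnion (kthSmallest k) ∈ Schreier n ∨ L.toFinset.biUnion (kthSmallest k) = ∅ := by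
  rcases eq_empty_or_nonempty (L.toFinset.biUnion (kthSmallest k)) with hG | hG
  · exact Or.inr hG
  refine Or.inl (mem_schreier_of_interlaced hM hG (fun x hx => ?_) (fun x hx y hy hxy => ?_))
  · obtain ⟨A, hA, hxA⟩ := mem_biUnion.1 hx
    exact ⟨_, hmin A (List.mem_toFinset.1 hA), Nat.sInf_le (kthSmallest_subset k A hxA)⟩
  · obtain ⟨A, hA, hxA⟩ := mem_biUnion.1 hx
    obtain ⟨B, hB, hyB⟩ := mem_biUnion.1 hy
    rw [List.mem_toFinset] at hA hB
    have hAB : A ≠ B := by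
      rintro rfl
      exact not_lt_of_mem_kthSmallest hxA hyB hxy
    have hminB := Nat.sInf_mem (coe_nonempty.2 (hne B hB))
    refine ⟨_, hmin B hB, ?_, Nat.sInf_le (kthSmallest_subset k B hyB)⟩
    rcases blockLt_or_blockLt_of_pairwise hL hA hB hAB with hAB | hBA
    · exact hAB x (kthSmallest_subset k A hxA) _ hminB
    · exact absurd (hBA y (kthSmallest_subset k B hyB) x (kthSmallest_subset k A hxA)) hxy.not_gt

/-- Every set in `S_n ∗ A_3` is the union of at most three sets in `S_n`
    (some possibly empty). -/
theorem stmt_0 (n : ℕ) (F : Finset ℕ) (hF : F ∈ SchreierA3 n) :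
    ∃ G₁ G₂ G₃ : Finset ℕ,
      (G₁ ∈ Schreier n ∨ G₁ = ∅) ∧ (G₂ ∈ Schreier n ∨ G₂ = ∅) ∧
      (G₃ ∈ Schreier n ∨ G₃ = ∅) ∧ F = G₁ ∪ G₂ ∪ G₃ := by
  obtain ⟨L, -, hL3, hch, hM, rfl⟩ := hF
  have hne : ∀ A ∈ L, A.Nonempty := fun A hA => (hL3 A hA).1
  have hL := pairwise_blockLt_of_isChain hch hne
  have hmin : ∀ A ∈ L, sInf (A : Set ℕ) ∈ (L.map fun A => sInf (A : Set ℕ)).toFinset := by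
    intro A hA
    simpa using ⟨A, hA, rfl⟩
  refine ⟨_, _, _, mem_schreier_biUnion_kthSmallest 0 hne hL hM hmin,
    mem_schreier_biUnion_kthSmallest 1 hne hL hM hmin,
    mem_schreier_biUnion_kthSmallest 2 hne hL hM hmin, ?_⟩
  ext x
  simp only [mem_foldr_union, mem_union, mem_biUnion, List.mem_toFinset]
  constructor
  · rintro ⟨A, hA, hx⟩
    obtain ⟨k, hk, hxk⟩ := exists_mem_kthSmallest hx
    have hk3 : k < 3 := hk.trans_le (hL3 A hA).2
    interval_cases k
    exacts [Or.inl (Or.inl ⟨A, hA, hxk⟩), Or.inl (Or.inr ⟨A, hA, hxk⟩), Or.inr ⟨A, hA, hxk⟩]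
  · rintro ((⟨A, hA, hx⟩ | ⟨A, hA, hx⟩) | ⟨A, hA, hx⟩) <;> exact ⟨A, hA, kthSmallest_subset _ A hx⟩
end

section
/- Let (m_j) and (n_j) be strictly increasing sequences of positive integers with m_1 = 100, n_1 = 1, m_{j+1} ≥ j² m_j², and n_{j+1} > (4 / log 100) · n_j · log(m_{j+1}). Suppose j ≥ 2 and j_1, …, j_ℓ are indices with each m_{j_i} ≤ m_{j-1} and the product m_{j_1} ⋯ m_{j_ℓ} < m_j⁴. Then n_{j_1} + ⋯ + n_{j_ℓ} < n_j. -/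
open Real Finset Set

/- Every admissible index lies below `j`, so each `n_{j_i}` is at most `n_{j-1}` while each
`log m_{j_i}` is at least `log 100`. Hence
`∑ n_{j_i} ≤ (n_{j-1} / log 100) ∑ log m_{j_i} ≤ (4 / log 100) n_{j-1} log m_j < n_j`,
the middle step being the logarithm of `∏ m_{j_i} < m_j⁴`. -/

theorem sum_le_div_mul_sum {ι : Type*} (s : Finset ι) {w y : ι → ℝ} {W β : ℝ}
    (hW : 0 ≤ W) (hβ : 0 < β) (hw : ∀ i ∈ s, w i ≤ W) (hy : ∀ i ∈ s, β ≤ y i) :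
    ∑ i ∈ s, w i ≤ W / β * ∑ i ∈ s, y i := by
  rw [Finset.mul_sum]
  refine Finset.sum_le_sum fun i hi => (hw i hi).trans ?_
  calc W = W / β * β := by field_simp
    _ ≤ W / β * y i := by gcongr; exact hy i hi

theorem sum_log_le_of_prod_le {ι : Type*} (s : Finset ι) {a : ι → ℕ} {M k : ℕ}
    (ha : ∀ i ∈ s, a i ≠ 0) (h : ∏ i ∈ s, a i ≤ M ^ k) :
    ∑ i ∈ s, log (a i) ≤ k * log M := by
  have hpos : (0 : ℝ) < ∏ i ∈ s, (a i : ℝ) :=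
    Finset.prod_pos fun i hi => Nat.cast_pos.2 (Nat.pos_of_ne_zero (ha i hi))
  rw [← Real.log_prod fun i hi => Nat.cast_ne_zero.2 (ha i hi), ← Real.log_pow]
  exact Real.log_le_log hpos (by exact_mod_cast h)

open Real in
theorem stmt_8_general (m n : ℕ → ℕ)
    (hm1 : m 1 = 100)
    (hmmono : ∀ j, 1 ≤ j → m j < m (j + 1))
    (hnmono : ∀ j, 1 ≤ j → n j < n (j + 1))
    (hng : ∀ j, 1 ≤ j →
      (4 / Real.log 100) * (n j : ℝ) * Real.log (m (j + 1)) < (n (j + 1) : ℝ))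
    (j : ℕ) (hj : 2 ≤ j) (ℓ : ℕ)
    (idx : Fin ℓ → ℕ) (hidx : ∀ i, 1 ≤ idx i)
    (hle : ∀ i, m (idx i) ≤ m (j - 1))
    (hprod : (∏ i, m (idx i)) < (m j) ^ 4) :
    (∑ i, n (idx i)) < n j := by
  have hm : StrictMonoOn m (Ici 1) :=
    strictMonoOn_of_lt_add_one ordConnected_Ici fun k _ hk _ => hmmono k hk
  have hn : MonotoneOn n (Ici 1) :=
    monotoneOn_of_le_add_one ordConnected_Ici fun k _ hk _ => (hnmono k hk).le
  have hidx_le : ∀ i, idx i ≤ j - 1 := fun i =>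
    (hm.le_iff_le (hidx i) (show 1 ≤ j - 1 by omega)).1 (hle i)
  have hm100 : ∀ i, 100 ≤ m (idx i) := fun i =>
    hm1 ▸ hm.monotoneOn (le_refl 1) (hidx i) (hidx i)
  have hlog_sum : ∑ i, log (m (idx i)) ≤ 4 * log (m j) := by
    exact_mod_cast sum_log_le_of_prod_le univ
      (fun i _ => by have := hm100 i; omega) hprod.le
  have hstep := hng (j - 1) (by omega)
  rw [Nat.sub_add_cancel (by omega)] at hstep
  have hcast : (∑ i, (n (idx i) : ℝ)) < n j :=
    calc ∑ i, (n (idx i) : ℝ)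
        ≤ n (j - 1) / log 100 * ∑ i, log (m (idx i)) :=
          sum_le_div_mul_sum univ (Nat.cast_nonneg _) (by positivity)
            (fun i _ => by exact_mod_cast hn (hidx i) (show 1 ≤ j - 1 by omega) (hidx_le i))
            (fun i _ => Real.log_le_log (by norm_num) (by exact_mod_cast hm100 i))
      _ ≤ n (j - 1) / log 100 * (4 * log (m j)) := by gcongr
      _ = 4 / log 100 * n (j - 1) * log (m j) := by ring
      _ < n j := hstep
  exact_mod_cast hcast

open Real in
/-- Weight-to-admissibility: if every `m_{j_i} ≤ m_{j-1}` and
    `m_{j_1} ⋯ m_{j_ℓ} < m_j⁴`, then `n_{j_1} + ⋯ + n_{j_ℓ} < n_j`. -/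
theorem stmt_8 (m n : ℕ → ℕ)
    (hm1 : m 1 = 100) (hn1 : n 1 = 1)
    (hmpos : ∀ j, 1 ≤ j → 0 < m j) (hnpos : ∀ j, 1 ≤ j → 0 < n j)
    (hmmono : ∀ j, 1 ≤ j → m j < m (j + 1))
    (hnmono : ∀ j, 1 ≤ j → n j < n (j + 1))
    (hmg : ∀ j, 1 ≤ j → j ^ 2 * (m j) ^ 2 ≤ m (j + 1))
    (hng : ∀ j, 1 ≤ j →
      (4 / Real.log 100) * (n j : ℝ) * Real.log (m (j + 1)) < (n (j + 1) : ℝ))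
    (j : ℕ) (hj : 2 ≤ j) (ℓ : ℕ) (hℓ : 1 ≤ ℓ)
    (idx : Fin ℓ → ℕ) (hidx : ∀ i, 1 ≤ idx i)
    (hle : ∀ i, m (idx i) ≤ m (j - 1))
    (hprod : (∏ i, m (idx i)) < (m j) ^ 4) :
    (∑ i, n (idx i)) < n j :=
  stmt_8_general m n hm1 hmmono hnmono hng j hj ℓ idx hidx hle hprod
end

section
/- Let (m_j) and (n_j) be sequences of positive integers with m_1 = 100, n_1 = 1, m_{j+1} ≥ j² m_j², and n_{j+1} > (4 / log 100) · n_j · log(m_{j+1}). Then for every real C > 1, the sequence C^{n_j} / m_j tends to infinity as j → ∞. -/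
/-- Under the growth conditions on `(m_j)` and `(n_j)`, for every `C > 1` the
    sequence `C^{n_j} / m_j` tends to infinity. -/
theorem stmt_9 (m n : ℕ → ℕ)
    (hm1 : m 1 = 100) (hn1 : n 1 = 1)
    (hmpos : ∀ j, 1 ≤ j → 0 < m j) (hnpos : ∀ j, 1 ≤ j → 0 < n j)
    (hmg : ∀ j, 1 ≤ j → j ^ 2 * (m j) ^ 2 ≤ m (j + 1))
    (hng : ∀ j, 1 ≤ j →
      (4 / Real.log 100) * (n j : ℝ) * Real.log (m (j + 1)) < (n (j + 1) : ℝ))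
    (C : ℝ) (hC : 1 < C) :
    Filter.Tendsto (fun j => C ^ (n j) / (m j : ℝ)) Filter.atTop Filter.atTop := by
  have hL : 0 < Real.log 100 := Real.log_pos (by norm_num)
  have hlogC : 0 < Real.log C := Real.log_pos hC
  -- m j ≥ 100 for j ≥ 1
  have hm100 : ∀ j, 1 ≤ j → 100 ≤ m j := by
    intro j hj
    induction j with
    | zero => omega
    | succ k ih =>
      rcases Nat.lt_or_ge k 1 with h | h
      · interval_cases k
        · simpa [hm1]
      · have h1 := hmg k h
        have h2 := ih h
        have h3 : m k ^ 2 ≤ k ^ 2 * m k ^ 2 := Nat.le_mul_of_pos_left _ (by positivity)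
        have h4 : m k ≤ m k ^ 2 := Nat.le_self_pow (by norm_num) _
        linarith
  have hlogm : ∀ j, 1 ≤ j → Real.log 100 ≤ Real.log (m j) := by
    intro j hj
    exact Real.log_le_log (by norm_num) (by exact_mod_cast hm100 j hj)
  -- n (j+1) > 4 * n j
  have hn4 : ∀ j, 1 ≤ j → (4 : ℝ) * n j < n (j + 1) := by
    intro j hj
    have h1 := hng j hj
    have h2 := hlogm (j + 1) (by omega)
    have h3 : (0 : ℝ) < n j := by exact_mod_cast hnpos j hj
    have h4 : (4 : ℝ) * n j ≤ (4 / Real.log 100) * n j * Real.log (m (j + 1)) := by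
      have heq : (4 : ℝ) * n j = (4 / Real.log 100) * n j * Real.log 100 := by
        field_simp
      rw [heq]
      have hpos : 0 ≤ (4 / Real.log 100) * (n j : ℝ) := by positivity
      exact mul_le_mul_of_nonneg_left h2 hpos
    linarith
  -- n j ≥ j for j ≥ 1
  have hnj : ∀ j, 1 ≤ j → j ≤ n j := by
    intro j hj
    induction j with
    | zero => omega
    | succ k ih =>
      rcases Nat.lt_or_ge k 1 with h | h
      · interval_cases k
        · simp [hn1]
      · have h1 := hn4 k h
        have h2 : (1 : ℝ) ≤ n k := by exact_mod_cast hnpos k h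
        have h3 : ((n k : ℝ) + 1) < n (k + 1) := by linarith
        have h4 : n k + 1 ≤ n (k + 1) := by exact_mod_cast h3.le
        have := ih h
        omega
  -- the key tendsto on the exponent
  have key : Filter.Tendsto (fun j => (n j : ℝ) * Real.log C - Real.log (m j))
      Filter.atTop Filter.atTop := by
    rw [Filter.tendsto_atTop]
    intro b
    set L := Real.log 100 with hLdef
    set b' := max b 1 with hb'
    have hb'1 : (1 : ℝ) ≤ b' := le_max_right _ _
    obtain ⟨J, hJ⟩ := exists_nat_ge ((b' + L) / (4 * Real.log C))
    filter_upwards [Filter.eventually_ge_atTop (J + 2)] with k hk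
    obtain ⟨j, rfl⟩ : ∃ j, k = j + 1 := ⟨k - 1, by omega⟩
    have hj1 : 1 ≤ j := by omega
    have hjJ : (J : ℝ) ≤ n j := by
      have h1 := hnj j hj1
      have h2 : J ≤ n j := by omega
      exact_mod_cast h2
    have hnjT : (b' + L) / (4 * Real.log C) ≤ (n j : ℝ) := le_trans hJ hjJ
    have hlm := hlogm (j + 1) (by omega)
    have h1 := hng j hj1
    have h2 : b' + L ≤ 4 * Real.log C * (n j : ℝ) := by
      rw [div_le_iff₀ (by positivity)] at hnjT
      linarith [hnjT]
    have hx : b' / L ≤ (4 * Real.log C / L) * (n j : ℝ) - 1 := by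
      have heq : (4 * Real.log C / L) * (n j : ℝ) - 1
          = (4 * Real.log C * (n j : ℝ) - L) / L := by
        field_simp
      rw [heq, div_le_div_iff_of_pos_right hL]
      linarith
    have hprod : b' ≤ Real.log (m (j + 1)) * ((4 * Real.log C / L) * (n j : ℝ) - 1) := by
      have hbL : 0 ≤ b' / L := by positivity
      calc b' = L * (b' / L) := by field_simp
        _ ≤ Real.log (m (j + 1)) * ((4 * Real.log C / L) * (n j : ℝ) - 1) :=
          mul_le_mul hlm hx hbL (le_trans hL.le hlm)
    have hexpand : Real.log (m (j + 1)) * ((4 * Real.log C / L) * (n j : ℝ) - 1)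
        = (4 / L) * (n j : ℝ) * Real.log (m (j + 1)) * Real.log C
          - Real.log (m (j + 1)) := by
      field_simp
    have h3 := mul_lt_mul_of_pos_right h1 hlogC
    have hb : b ≤ b' := le_max_left _ _
    show b ≤ (n (j + 1) : ℝ) * Real.log C - Real.log (m (j + 1))
    linarith [hprod, hexpand ▸ hprod, h3]
  -- conclude by exponentiating
  have hev : (fun j => Real.exp ((n j : ℝ) * Real.log C - Real.log (m j)))
      =ᶠ[Filter.atTop] (fun j => C ^ (n j) / (m j : ℝ)) := by
    filter_upwards [Filter.eventually_ge_atTop 1] with j hj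
    have hm : (0 : ℝ) < m j := by exact_mod_cast hmpos j hj
    have hCpos : (0 : ℝ) < C := lt_trans zero_lt_one hC
    rw [Real.exp_sub, Real.exp_log hm, Real.exp_nat_mul, Real.exp_log hCpos]
  exact (Real.tendsto_exp_atTop.comp key).congr' hev
end

section
/- Let (q_n)_{n≥1} be an enumeration of the rational numbers in [0,1], and define f : [0,1] → c_0 by f(q_n) = e_n (the n-th unit vector of c_0) for each n and f(t) = 0 for irrational t. Then f is Riemann integrable with Riemann integral 0: for every ε > 0 there exists a partition of [0,1] such that every Riemann sum for f with mesh finer than that partition has c_0-norm less than ε. -/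
lemma aux_coe_sum_apply {k : ℕ} (g : Fin k → ZeroAtInftyContinuousMap ℕ ℝ) (j : ℕ) :
    (∑ i : Fin k, g i) j = ∑ i : Fin k, g i j := by
  classical
  let φ : ZeroAtInftyContinuousMap ℕ ℝ →+ ℝ :=
    { toFun := fun h => h j
      map_zero' := rfl
      map_add' := fun a b => rfl }
  exact map_sum φ g Finset.univ

lemma aux_sum_le {k : ℕ} (g : Fin k → ℝ) (δ : ℝ) (hδ : 0 ≤ δ)
    (hg : ∀ i, g i ≤ δ)
    (h : ∀ i i', g i ≠ 0 → g i' ≠ 0 → i = i') : ∑ i : Fin k, g i ≤ δ := by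
  classical
  rw [← Finset.sum_filter_ne_zero]
  have hcard : (Finset.univ.filter (fun i => g i ≠ 0)).card ≤ 1 := by
    rw [Finset.card_le_one]
    intro a ha b hb
    simp only [Finset.mem_filter] at ha hb
    exact h a b ha.2 hb.2
  calc ∑ i ∈ Finset.univ.filter (fun i => g i ≠ 0), g i
      ≤ (Finset.univ.filter (fun i => g i ≠ 0)).card • δ :=
        Finset.sum_le_card_nsmul _ _ δ (fun i _ => hg i)
    _ ≤ 1 • δ := nsmul_le_nsmul_left hδ hcard
    _ = δ := one_smul _ _

/-- The Dirichlet-type function into `c₀` sending the `n`-th rational of `[0,1]` to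
    the unit vector `e n` and irrationals to `0` is Riemann integrable with
    integral `0`. -/
theorem stmt_13 (q : ℕ → ℝ) (hqinj : Function.Injective q)
    (hqrange : Set.range q = {x | x ∈ Set.Icc (0 : ℝ) 1 ∧ ∃ r : ℚ, (r : ℝ) = x})
    (f : ℝ → ZeroAtInftyContinuousMap ℕ ℝ)
    (hfq : ∀ n j : ℕ, f (q n) j = if j = n then 1 else 0)
    (hf0 : ∀ t ∈ Set.Icc (0 : ℝ) 1, t ∉ Set.range q → f t = 0) :
    ∀ ε > 0, ∃ δ > 0, ∀ (k : ℕ) (t : Fin (k + 1) → ℝ) (s : Fin k → ℝ),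
      t 0 = 0 → t (Fin.last k) = 1 → Monotone t →
      (∀ i : Fin k, t i.succ - t i.castSucc < δ) →
      (∀ i : Fin k, s i ∈ Set.Icc (t i.castSucc) (t i.succ)) →
      ‖∑ i : Fin k, (t i.succ - t i.castSucc) • f (s i)‖ < ε := by
  classical
  intro ε hε
  refine ⟨ε / 4, by positivity, ?_⟩
  intro k t s ht0 ht1 hmono hmesh htags
  set δ : ℝ := ε / 4 with hδdef
  have hδpos : 0 < δ := by positivity
  have hsIcc : ∀ i : Fin k, s i ∈ Set.Icc (0 : ℝ) 1 := by
    intro i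
    obtain ⟨h1, h2⟩ := htags i
    exact ⟨le_trans (ht0 ▸ hmono (Fin.zero_le _)) h1,
      le_trans h2 (ht1 ▸ hmono (Fin.le_last _))⟩
  have hfs : ∀ (i : Fin k) (j : ℕ), f (s i) j = if s i = q j then 1 else 0 := by
    intro i j
    by_cases hr : s i ∈ Set.range q
    · obtain ⟨n, hn⟩ := hr
      rw [← hn, hfq]
      by_cases hjn : j = n
      · subst hjn; simp
      · rw [if_neg hjn, if_neg (fun h => hjn (hqinj h).symm)]
    · rw [hf0 (s i) (hsIcc i) hr, if_neg (fun h => hr ⟨j, h.symm⟩)]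
      rfl
  -- coordinatewise bound
  have hcoord : ∀ j : ℕ,
      ‖(∑ i : Fin k, (t i.succ - t i.castSucc) • f (s i)) j‖ ≤ 2 * δ := by
    intro j
    rw [aux_coe_sum_apply]
    have hA : ∑ i : Fin k, (if s i = q j then t i.succ - q j else 0) ≤ δ := by
      refine aux_sum_le _ δ hδpos.le ?_ ?_
      · intro i
        by_cases h : s i = q j
        · rw [if_pos h]
          have := (htags i).1
          have := hmesh i
          linarith [h ▸ (htags i).1]
        · rw [if_neg h]; exact hδpos.le
      · intro i i' hi hi'
        by_contra hne
        rcases lt_or_gt_of_ne hne with hlt | hlt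
        · -- i < i' : then t i.succ ≤ t i'.castSucc ≤ s i' = q j, so A i ≤ 0
          rw [ne_eq, ite_eq_right_iff, not_forall] at hi
          obtain ⟨hsi, hAi⟩ := hi
          rw [ne_eq, ite_eq_right_iff, not_forall] at hi'
          obtain ⟨hsi', _⟩ := hi'
          have h1 : t i.succ ≤ t i'.castSucc := hmono (by
            simp only [Fin.le_def, Fin.val_succ, Fin.coe_castSucc]
            exact hlt)
          have h2 : t i'.castSucc ≤ q j := hsi' ▸ (htags i').1
          have h3 : q j ≤ t i.succ := hsi ▸ (htags i).2
          exact hAi (by linarith)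
        · rw [ne_eq, ite_eq_right_iff, not_forall] at hi
          obtain ⟨hsi, _⟩ := hi
          rw [ne_eq, ite_eq_right_iff, not_forall] at hi'
          obtain ⟨hsi', hAi'⟩ := hi'
          have h1 : t i'.succ ≤ t i.castSucc := hmono (by
            simp only [Fin.le_def, Fin.val_succ, Fin.coe_castSucc]
            exact hlt)
          have h2 : t i.castSucc ≤ q j := hsi ▸ (htags i).1
          have h3 : q j ≤ t i'.succ := hsi' ▸ (htags i').2
          exact hAi' (by linarith)
    have hB : ∑ i : Fin k, (if s i = q j then q j - t i.castSucc else 0) ≤ δ := by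
      refine aux_sum_le _ δ hδpos.le ?_ ?_
      · intro i
        by_cases h : s i = q j
        · rw [if_pos h]
          have := hmesh i
          linarith [h ▸ (htags i).2]
        · rw [if_neg h]; exact hδpos.le
      · intro i i' hi hi'
        by_contra hne
        rcases lt_or_gt_of_ne hne with hlt | hlt
        · rw [ne_eq, ite_eq_right_iff, not_forall] at hi
          obtain ⟨hsi, _⟩ := hi
          rw [ne_eq, ite_eq_right_iff, not_forall] at hi'
          obtain ⟨hsi', hBi'⟩ := hi'
          have h1 : t i.succ ≤ t i'.castSucc := hmono (by
            simp only [Fin.le_def, Fin.val_succ, Fin.coe_castSucc]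
            exact hlt)
          have h2 : q j ≤ t i.succ := hsi ▸ (htags i).2
          have h3 : t i'.castSucc ≤ q j := hsi' ▸ (htags i').1
          exact hBi' (by linarith)
        · rw [ne_eq, ite_eq_right_iff, not_forall] at hi
          obtain ⟨hsi, hBi⟩ := hi
          rw [ne_eq, ite_eq_right_iff, not_forall] at hi'
          obtain ⟨hsi', _⟩ := hi'
          have h1 : t i'.succ ≤ t i.castSucc := hmono (by
            simp only [Fin.le_def, Fin.val_succ, Fin.coe_castSucc]
            exact hlt)
          have h2 : q j ≤ t i'.succ := hsi' ▸ (htags i').2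
          have h3 : t i.castSucc ≤ q j := hsi ▸ (htags i).1
          exact hBi (by linarith)
    have hval : ∑ i : Fin k, ((t i.succ - t i.castSucc) • f (s i)) j
        = ∑ i : Fin k, ((if s i = q j then t i.succ - q j else 0)
            + (if s i = q j then q j - t i.castSucc else 0)) := by
      refine Finset.sum_congr rfl (fun i _ => ?_)
      rw [ZeroAtInftyContinuousMap.coe_smul, Pi.smul_apply, hfs i j, smul_eq_mul]
      by_cases h : s i = q j <;> simp [h] <;> ring
    have hnn : 0 ≤ ∑ i : Fin k, ((t i.succ - t i.castSucc) • f (s i)) j := by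
      refine Finset.sum_nonneg (fun i _ => ?_)
      rw [ZeroAtInftyContinuousMap.coe_smul, Pi.smul_apply, hfs i j, smul_eq_mul]
      have h1 : t i.castSucc ≤ t i.succ := hmono (Fin.castSucc_le_succ i)
      by_cases h : s i = q j <;> simp [h] <;> linarith
    rw [Real.norm_eq_abs, abs_of_nonneg hnn, hval, Finset.sum_add_distrib]
    linarith
  have hnorm : ‖∑ i : Fin k, (t i.succ - t i.castSucc) • f (s i)‖ ≤ 2 * δ := by
    rw [← ZeroAtInftyContinuousMap.norm_toBCF_eq_norm]
    refine (BoundedContinuousFunction.norm_le (by positivity)).2 (fun j => ?_)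
    exact hcoord j
  have : 2 * δ < ε := by rw [hδdef]; linarith
  linarith
end
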